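/- For any positive integer λ and G(ψ) = cos(λψ + ψ₀), the function J_λ = (p_r + (p_ψ/(λr)) ∂/∂ψ)^λ G is a first integral of the geodesic Hamiltonian H_g = ½(p_r² + p_ψ²/r²), i.e., {H_g, J_λ} = 0. -/

import Mathlib

open Real

/- Phase space coordinates: `x 0 = r`, `x 1 = ψ`, `x 2 = p_r`, `x 3 = p_ψ`. -/

/-- Partial derivative with respect to the `i`-th coordinate. -/
noncomputable def pd (i : Fin 4) (f : (Fin 4 → ℝ) → ℝ) (x : Fin 4 → ℝ) : ℝ :=
  deriv (fun t => f (Function.update x i t)) (x i)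

/-- The angular Hamiltonian `L = ½ p_ψ² + F(ψ)`. -/
noncomputable def Lfun (F : ℝ → ℝ) (x : Fin 4 → ℝ) : ℝ :=
  (1/2) * (x 3)^2 + F (x 1)

/-- The Hamiltonian vector field `X_L = p_ψ ∂/∂ψ − F'(ψ) ∂/∂p_ψ` as an operator. -/
noncomputable def XL (F : ℝ → ℝ) (f : (Fin 4 → ℝ) → ℝ) (x : Fin 4 → ℝ) : ℝ :=
  x 3 * pd 1 f x - deriv F (x 1) * pd 3 f x

/-- The Hamiltonian `H = ½ p_r² + (½ p_ψ² + F(ψ))/r²`. -/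
noncomputable def Hfun (F : ℝ → ℝ) (x : Fin 4 → ℝ) : ℝ :=
  (1/2) * (x 2)^2 + (1 / (x 0)^2) * ((1/2) * (x 3)^2 + F (x 1))

/-- Standard Poisson bracket on the phase space `(r, ψ, p_r, p_ψ)`. -/
noncomputable def poisson (f g : (Fin 4 → ℝ) → ℝ) (x : Fin 4 → ℝ) : ℝ :=
  (pd 0 f x * pd 2 g x - pd 2 f x * pd 0 g x) +
  (pd 1 f x * pd 3 g x - pd 3 f x * pd 1 g x)

/-- The operator `p_r + (p_ψ/(λr)) ∂/∂ψ`. -/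
noncomputable def Vop (lam : ℕ) (f : (Fin 4 → ℝ) → ℝ) (x : Fin 4 → ℝ) : ℝ :=
  x 2 * f x + (x 3 / (lam * x 0)) * pd 1 f x

/-! With `z = p_r + i p_ψ / r`, the operator `p_r + (p_ψ/(λr)) ∂/∂ψ` multiplies the complex mode
`z^n e^{i(λψ+ψ₀)}` by `z`, so `J_λ = Re (e^{iψ₀} (z e^{iψ})^λ)`. Here `z e^{iψ} = p_x + i p_y` is
the Cartesian momentum, which free motion conserves. Concretely,
`{H_g, Re (z^n e^{i(λψ+ψ₀)})} = Re (i (n - λ) (p_ψ / r²) z^n e^{i(λψ+ψ₀)})`,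
which vanishes at `n = λ`. -/

open Complex in
noncomputable def complexMomentum (x : Fin 4 → ℝ) : ℂ :=
  x 2 + I * (x 3 / x 0)

open Complex in
noncomputable def phaseFactor (lam : ℕ) (ψ₀ : ℝ) (x : Fin 4 → ℝ) : ℂ :=
  cexp ((lam * x 1 + ψ₀) * I)

noncomputable def modeFunction (lam : ℕ) (ψ₀ : ℝ) (n : ℕ) (x : Fin 4 → ℝ) : ℝ :=
  (complexMomentum x ^ n * phaseFactor lam ψ₀ x).re

noncomputable def geodesicHamiltonian (y : Fin 4 → ℝ) : ℝ :=
  (1/2) * ((y 2)^2 + (y 3)^2 / (y 0)^2)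

section PartialDerivative

variable {i : Fin 4} {f g : (Fin 4 → ℝ) → ℝ} {x : Fin 4 → ℝ}

theorem pd_eq_of_hasDerivAt {h : ℝ → ℝ} {h' : ℝ} (hf : ∀ t, f (Function.update x i t) = h t)
    (hh : HasDerivAt h h' (x i)) : pd i f x = h' := by
  rw [pd, funext hf, hh.deriv]

theorem pd_eq_re_of_hasDerivAt {h : ℂ → ℂ} {h' : ℂ}
    (hf : ∀ t : ℝ, f (Function.update x i t) = (h t).re) (hh : HasDerivAt h h' (x i)) :
    pd i f x = h'.re :=
  pd_eq_of_hasDerivAt hf hh.real_of_complex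

theorem pd_congr_of_eqOn {s : Set (Fin 4 → ℝ)} (hs : IsOpen s) (hx : x ∈ s) (hfg : Set.EqOn f g s) :
    pd i f x = pd i g x := by
  have hcont : Continuous (fun t : ℝ => Function.update x i t) :=
    continuous_const.update i continuous_id
  have hmem : ∀ᶠ t in nhds (x i), Function.update x i t ∈ s :=
    hcont.continuousAt.preimage_mem_nhds (by simpa using hs.mem_nhds hx)
  exact Filter.EventuallyEq.deriv_eq (hmem.mono fun t ht => hfg ht)

theorem poisson_congr_of_eqOn {s : Set (Fin 4 → ℝ)} (hs : IsOpen s) (hx : x ∈ s)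
    (hfg : Set.EqOn f g s) (H : (Fin 4 → ℝ) → ℝ) : poisson H f x = poisson H g x := by
  simp only [poisson, pd_congr_of_eqOn hs hx hfg]

end PartialDerivative

section ModeDerivatives

open Complex

variable (lam : ℕ) (ψ₀ : ℝ) (n : ℕ) (x : Fin 4 → ℝ)

theorem pd_zero_modeFunction (hx : x 0 ≠ 0) :
    pd 0 (modeFunction lam ψ₀ n) x =
      (-(n * complexMomentum x ^ (n - 1) * I * x 3 / x 0 ^ 2) * phaseFactor lam ψ₀ x).re := by
  have hx' : ((x 0 : ℝ) : ℂ) ≠ 0 := by exact_mod_cast hx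
  refine pd_eq_re_of_hasDerivAt
    (h := fun w : ℂ => (x 2 + I * (x 3 * w⁻¹)) ^ n * phaseFactor lam ψ₀ x)
    (fun t => by simp [modeFunction, complexMomentum, phaseFactor, div_eq_mul_inv])
    (((((hasDerivAt_inv hx').const_mul _).const_mul I).const_add _).pow n |>.mul_const _)
    |>.trans ?_
  simp only [complexMomentum]
  congr 1
  field_simp

theorem pd_one_modeFunction :
    pd 1 (modeFunction lam ψ₀ n) x =
      (complexMomentum x ^ n * (lam * I) * phaseFactor lam ψ₀ x).re := by
  refine pd_eq_re_of_hasDerivAt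
    (h := fun w : ℂ => complexMomentum x ^ n * cexp ((lam * w + ψ₀) * I))
    (fun t => by simp [modeFunction, complexMomentum, phaseFactor])
    ((((((hasDerivAt_id _).const_mul _).add_const _).mul_const I).cexp).const_mul _) |>.trans ?_
  simp only [phaseFactor]
  congr 1
  ring

theorem pd_two_modeFunction :
    pd 2 (modeFunction lam ψ₀ n) x =
      (n * complexMomentum x ^ (n - 1) * phaseFactor lam ψ₀ x).re := by
  refine pd_eq_re_of_hasDerivAt (h := fun w : ℂ => (w + I * (x 3 / x 0)) ^ n * phaseFactor lam ψ₀ x)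
    (fun t => by simp [modeFunction, complexMomentum, phaseFactor])
    ((((hasDerivAt_id _).add_const _).pow n).mul_const _) |>.trans ?_
  simp [complexMomentum]

theorem pd_three_modeFunction :
    pd 3 (modeFunction lam ψ₀ n) x =
      (n * complexMomentum x ^ (n - 1) * (I / x 0) * phaseFactor lam ψ₀ x).re := by
  refine pd_eq_re_of_hasDerivAt (h := fun w : ℂ => (x 2 + I * (w / x 0)) ^ n * phaseFactor lam ψ₀ x)
    (fun t => by simp [modeFunction, complexMomentum, phaseFactor])
    (((((hasDerivAt_id _).div_const _).const_mul I).const_add _).pow n |>.mul_const _) |>.trans ?_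
  simp only [complexMomentum]
  congr 1
  ring

end ModeDerivatives

section HamiltonianDerivatives

variable (x : Fin 4 → ℝ)

theorem pd_zero_geodesicHamiltonian (hx : x 0 ≠ 0) :
    pd 0 geodesicHamiltonian x = -(x 3) ^ 2 / x 0 ^ 3 := by
  refine pd_eq_of_hasDerivAt (h := fun t => (1/2) * ((x 2)^2 + (x 3)^2 * (t ^ 2)⁻¹))
    (fun t => by simp [geodesicHamiltonian, div_eq_mul_inv])
    ((((hasDerivAt_pow 2 (x 0)).inv (pow_ne_zero 2 hx)).const_mul _).const_add _ |>.const_mul _)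
    |>.trans ?_
  field_simp
  ring

theorem pd_one_geodesicHamiltonian : pd 1 geodesicHamiltonian x = 0 :=
  pd_eq_of_hasDerivAt (h := fun _ => geodesicHamiltonian x)
    (fun t => by simp [geodesicHamiltonian]) (hasDerivAt_const _ _)

theorem pd_two_geodesicHamiltonian : pd 2 geodesicHamiltonian x = x 2 := by
  refine pd_eq_of_hasDerivAt (h := fun t => (1/2) * (t ^ 2 + (x 3)^2 / (x 0)^2))
    (fun t => by simp [geodesicHamiltonian])
    (((hasDerivAt_pow 2 _).add_const _).const_mul _) |>.trans ?_
  ring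

theorem pd_three_geodesicHamiltonian : pd 3 geodesicHamiltonian x = x 3 / x 0 ^ 2 := by
  refine pd_eq_of_hasDerivAt (h := fun t => (1/2) * ((x 2)^2 + t ^ 2 / (x 0)^2))
    (fun t => by simp [geodesicHamiltonian])
    ((((hasDerivAt_pow 2 _).div_const _).const_add _).const_mul _) |>.trans ?_
  ring

end HamiltonianDerivatives

theorem poisson_geodesicHamiltonian_modeFunction (lam : ℕ) (ψ₀ : ℝ) (n : ℕ) (x : Fin 4 → ℝ)
    (hx : x 0 ≠ 0) :
    poisson geodesicHamiltonian (modeFunction lam ψ₀ n) x =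
      ((n - lam) * Complex.I * (x 3 / x 0 ^ 2) * complexMomentum x ^ n *
        phaseFactor lam ψ₀ x).re := by
  rw [poisson, pd_zero_geodesicHamiltonian x hx, pd_one_geodesicHamiltonian,
    pd_two_geodesicHamiltonian, pd_three_geodesicHamiltonian, pd_zero_modeFunction _ _ _ _ hx,
    pd_one_modeFunction, pd_two_modeFunction, pd_three_modeFunction]
  simp only [← Complex.re_ofReal_mul, ← Complex.sub_re, ← Complex.add_re]
  congr 1
  have hx' : ((x 0 : ℝ) : ℂ) ≠ 0 := by exact_mod_cast hx
  rcases n with _ | m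
  · push_cast; ring
  · simp only [Nat.add_sub_cancel, complexMomentum, pow_succ]
    push_cast
    field_simp
    ring_nf
    simp only [Complex.I_sq]
    ring

theorem Vop_modeFunction (lam : ℕ) (hlam : lam ≠ 0) (ψ₀ : ℝ) (n : ℕ) (x : Fin 4 → ℝ)
    (hx : x 0 ≠ 0) :
    Vop lam (modeFunction lam ψ₀ n) x = modeFunction lam ψ₀ (n + 1) x := by
  have hx' : ((x 0 : ℝ) : ℂ) ≠ 0 := by exact_mod_cast hx
  have hlam' : (lam : ℂ) ≠ 0 := by exact_mod_cast hlam
  rw [Vop, pd_one_modeFunction, modeFunction, modeFunction, ← Complex.re_ofReal_mul,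
    ← Complex.re_ofReal_mul, ← Complex.add_re]
  congr 1
  simp only [complexMomentum, pow_succ]
  push_cast
  field_simp

theorem isOpen_radius_ne_zero : IsOpen {y : Fin 4 → ℝ | y 0 ≠ 0} :=
  isOpen_ne_fun (continuous_apply 0) continuous_const

theorem Vop_congr_of_eqOn {lam : ℕ} {f g : (Fin 4 → ℝ) → ℝ} {s : Set (Fin 4 → ℝ)} (hs : IsOpen s)
    (hfg : Set.EqOn f g s) : Set.EqOn (Vop lam f) (Vop lam g) s := fun x hx => by
  rw [Vop, Vop, hfg hx, pd_congr_of_eqOn hs hx hfg]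

theorem iterate_Vop_eqOn_modeFunction (lam : ℕ) (hlam : lam ≠ 0) (ψ₀ : ℝ) (n : ℕ) :
    Set.EqOn ((Vop lam)^[n] fun y => cos (lam * y 1 + ψ₀)) (modeFunction lam ψ₀ n)
      {y | y 0 ≠ 0} := by
  induction n with
  | zero =>
    intro y _
    simp [modeFunction, phaseFactor, ← Complex.exp_ofReal_mul_I_re]
  | succ n ih =>
    intro y hy
    rw [Function.iterate_succ_apply', Vop_congr_of_eqOn isOpen_radius_ne_zero ih hy,
      Vop_modeFunction lam hlam ψ₀ n y hy]

/-- For any positive integer `λ` and `G(ψ) = cos(λψ + ψ₀)`, the function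
`J_λ = (p_r + (p_ψ/(λr))∂/∂ψ)^λ G` is a first integral of the geodesic Hamiltonian
`H_g = ½(p_r² + p_ψ²/r²)`. -/
theorem geodesic_first_integral (lam : ℕ) (hlam : 0 < lam) (ψ₀ : ℝ)
    (x : Fin 4 → ℝ) (hr : 0 < x 0) :
    poisson (fun y => (1/2) * ((y 2)^2 + (y 3)^2 / (y 0)^2))
      ((Vop lam)^[lam] (fun y => cos (lam * y 1 + ψ₀))) x = 0 := by
  change poisson geodesicHamiltonian _ x = 0
  rw [poisson_congr_of_eqOn isOpen_radius_ne_zero hr.ne'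
      (iterate_Vop_eqOn_modeFunction lam hlam.ne' ψ₀ lam),
    poisson_geodesicHamiltonian_modeFunction lam ψ₀ lam x hr.ne', sub_self]
  simp
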